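/- Terminal set invariance (Proposition 3, invariance part): With P, H_i, K, ρ_θ, L_B, w_η, d̄, c_j, c_max as defined (ρ_θ = max_i max_{x∈P} H_i A_cl(θ)x; L_B = max_{i,l} max_{x∈P} H_i D(x,Kx)ẽ_l; w_η(z,v) = η max_{i,l} H_i D(z,v)ẽ_l; d̄ = max_i max_{d∈D} H_i d; c_j = max_{x∈P}(F_j+G_jK)x; c_max = max_j c_j), suppose ρ_{θ̄₀} + η₀ L_B + c_max d̄ ≤ 1. Let Θ = θ̄ ⊕ η B_p ⊆ θ̄₀ ⊕ η₀ B_p. Then for all (x,s) ∈ X_f = {(x,s) : c_max(s + H_i x) ≤ 1 ∀i} with s ≥ 0, all s̃ ≥ 0, all s⁺ ∈ [0, (ρ_{θ̄} + η L_B)s + w_η(x,Kx) + d̄ − s̃], and all x⁺ with max_i H_i(x⁺ − A_cl(θ̄)x) ≤ s̃, it holds that (x⁺, s⁺) ∈ X_f. -/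

import Mathlib

open Matrix

noncomputable section

/-- The `2^p` vertices of the unit hypercube `B_p = {θ | ‖θ‖_∞ ≤ 1/2}`. -/
def vertexSet (p : ℕ) : Set (Fin p → ℝ) := {e | ∀ i, e i = 1 / 2 ∨ e i = -(1 / 2)}

/-- Affine parametrization `A(θ) = A₀ + Σ_i θ_i A_i`. -/
def Amat {n p : ℕ} (A0 : Matrix (Fin n) (Fin n) ℝ) (A : Fin p → Matrix (Fin n) (Fin n) ℝ)
    (θ : Fin p → ℝ) : Matrix (Fin n) (Fin n) ℝ := A0 + ∑ i, θ i • A i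

/-- Affine parametrization `B(θ) = B₀ + Σ_i θ_i B_i`. -/
def Bmat {n m p : ℕ} (B0 : Matrix (Fin n) (Fin m) ℝ) (B : Fin p → Matrix (Fin n) (Fin m) ℝ)
    (θ : Fin p → ℝ) : Matrix (Fin n) (Fin m) ℝ := B0 + ∑ i, θ i • B i

/-- `D(x,u) = [A₁x + B₁u, …, A_p x + B_p u]`. -/
def Dmat {n m p : ℕ} (A : Fin p → Matrix (Fin n) (Fin n) ℝ)
    (B : Fin p → Matrix (Fin n) (Fin m) ℝ) (x : Fin n → ℝ) (u : Fin m → ℝ) :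
    Matrix (Fin n) (Fin p) ℝ := Matrix.of fun i j => (A j *ᵥ x + B j *ᵥ u) i

/-- Contraction rate `ρ_M = max_i max_{x ∈ P} H_i M x`. -/
def rho {n r : ℕ} (H : Fin r → (Fin n → ℝ)) (P : Set (Fin n → ℝ))
    (M : Matrix (Fin n) (Fin n) ℝ) : ℝ :=
  sSup {y | ∃ i, ∃ x ∈ P, y = H i ⬝ᵥ (M *ᵥ x)}

/-- `L_B = max_{i,l} max_{x ∈ P} H_i D(x, Kx) ẽ_l`. -/
def LB {n m p r : ℕ} (H : Fin r → (Fin n → ℝ)) (P : Set (Fin n → ℝ))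
    (A : Fin p → Matrix (Fin n) (Fin n) ℝ) (B : Fin p → Matrix (Fin n) (Fin m) ℝ)
    (K : Matrix (Fin m) (Fin n) ℝ) : ℝ :=
  sSup {y | ∃ i, ∃ e ∈ vertexSet p, ∃ x ∈ P, y = H i ⬝ᵥ (Dmat A B x (K *ᵥ x) *ᵥ e)}

/-- `w_η(z,v) = η · max_{i,l} H_i D(z,v) ẽ_l`. -/
def wfun {n m p r : ℕ} (H : Fin r → (Fin n → ℝ))
    (A : Fin p → Matrix (Fin n) (Fin n) ℝ) (B : Fin p → Matrix (Fin n) (Fin m) ℝ)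
    (η : ℝ) (z : Fin n → ℝ) (v : Fin m → ℝ) : ℝ :=
  η * sSup {y | ∃ i, ∃ e ∈ vertexSet p, y = H i ⬝ᵥ (Dmat A B z v *ᵥ e)}

/-- `d̄ = max_i max_{d ∈ D} H_i d`. -/
def dbarDef {n r : ℕ} (H : Fin r → (Fin n → ℝ)) (Dset : Set (Fin n → ℝ)) : ℝ :=
  sSup {y | ∃ i, ∃ d ∈ Dset, y = H i ⬝ᵥ d}

/-!
For `(x, s) ∈ X_f` every `H_i x` is at most `a := 1/c_max - s`, and `a ≥ 0` because `P` is
bounded. The maps `z ↦ H_i A_cl(θ̄) z` and `z ↦ H_i D(z, Kz) ẽ_l` are positively homogeneous, so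
on `a P` they are bounded by `a` times their maxima over `P`. On `P`, writing
`A_cl(θ̄) z = A_cl(θ̄₀) z + D(z, Kz)(θ̄ - θ̄₀)` with `|θ̄ - θ̄₀| ≤ (η₀ - η)/2` componentwise and
taking the vertex `ẽ_l` with the signs of `H_i D(z, Kz)` gives
`H_i A_cl(θ̄) z ≤ ρ_{θ̄₀} + (η₀ - η) L_B`; in particular `ρ_{θ̄} ≤ ρ_{θ̄₀} + (η₀ - η) L_B`.
Adding up, `s⁺ + H_i x⁺ ≤ (ρ_{θ̄₀} + η₀ L_B)(s + a) + d̄ = (ρ_{θ̄₀} + η₀ L_B)/c_max + d̄`,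
and the terminal condition makes this at most `1/c_max`.
-/

section Polyhedron

variable {ι σ : Type*} [Fintype σ] (H : ι → σ → ℝ)

theorem eq_zero_of_forall_dotProduct_nonpos
    (hb : Bornology.IsBounded {x | ∀ i, H i ⬝ᵥ x ≤ 1}) {x : σ → ℝ}
    (hx : ∀ i, H i ⬝ᵥ x ≤ 0) : x = 0 := by
  obtain ⟨R, hR⟩ := isBounded_iff_forall_norm_le.mp hb
  have hray : ∀ t : ℝ, 0 ≤ t → ‖t • x‖ ≤ R := fun t ht => hR _ fun i => by
    simpa [dotProduct_smul] using (mul_nonpos_of_nonneg_of_nonpos ht (hx i)).trans zero_le_one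
  by_contra hx0
  have hnx : 0 < ‖x‖ := norm_pos_iff.mpr hx0
  have hR0 : 0 ≤ R := (norm_nonneg _).trans (hray 0 le_rfl)
  have := hray ((R + 1) / ‖x‖) (by positivity)
  rw [norm_smul, Real.norm_of_nonneg (by positivity), div_mul_cancel₀ _ hnx.ne'] at this
  linarith

theorem nonneg_of_forall_dotProduct_le [Nonempty ι]
    (hb : Bornology.IsBounded {x | ∀ i, H i ⬝ᵥ x ≤ 1}) {x : σ → ℝ} {a : ℝ}
    (hx : ∀ i, H i ⬝ᵥ x ≤ a) : 0 ≤ a := by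
  by_contra! ha
  obtain rfl := eq_zero_of_forall_dotProduct_nonpos H hb fun i => (hx i).trans ha.le
  obtain ⟨i⟩ := ‹Nonempty ι›
  simpa using (hx i).trans_lt ha

theorem le_mul_of_forall_dotProduct_le
    (hb : Bornology.IsBounded {x | ∀ i, H i ⬝ᵥ x ≤ 1}) {f : (σ → ℝ) → ℝ}
    (hf : ∀ t : ℝ, 0 ≤ t → ∀ x, f (t • x) = t * f x) {C : ℝ}
    (hC : ∀ z ∈ {x | ∀ i, H i ⬝ᵥ x ≤ 1}, f z ≤ C) {x : σ → ℝ} {a : ℝ} (ha : 0 ≤ a)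
    (hx : ∀ i, H i ⬝ᵥ x ≤ a) : f x ≤ a * C := by
  rcases ha.eq_or_lt with rfl | ha
  · obtain rfl := eq_zero_of_forall_dotProduct_nonpos H hb hx
    simpa using (hf 0 le_rfl 0).le
  · have hmem : a⁻¹ • x ∈ {x | ∀ i, H i ⬝ᵥ x ≤ 1} := fun i => by
      rw [dotProduct_smul, smul_eq_mul, inv_mul_le_iff₀ ha, mul_one]
      exact hx i
    calc f x = a * f (a⁻¹ • x) := by rw [← hf a ha.le, smul_inv_smul₀ ha.ne']
      _ ≤ a * C := mul_le_mul_of_nonneg_left (hC _ hmem) ha.le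

end Polyhedron

theorem abs_sub_le_of_box_subset {ι : Type*} [DecidableEq ι] {a b : ι → ℝ} {η η0 : ℝ}
    (hη : 0 ≤ η)
    (h : {θ : ι → ℝ | ∀ i, |θ i - a i| ≤ η / 2} ⊆ {θ : ι → ℝ | ∀ i, |θ i - b i| ≤ η0 / 2})
    (j : ι) : |a j - b j| ≤ (η0 - η) / 2 := by
  have shift : ∀ t : ℝ, |t| ≤ η / 2 → |a j + t - b j| ≤ η0 / 2 := fun t ht => by
    have hmem : Function.update a j (a j + t) ∈ {θ : ι → ℝ | ∀ i, |θ i - a i| ≤ η / 2} := by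
      intro i
      rcases eq_or_ne i j with rfl | hij
      · simpa using ht
      · simp [hij]; positivity
    simpa using h hmem j
  have hup := (abs_le.mp (shift (η / 2) (by rw [abs_of_nonneg]; positivity))).2
  have hdown := (abs_le.mp (shift (-(η / 2)) (by rw [abs_neg, abs_of_nonneg]; positivity))).1
  rw [abs_le]
  constructor <;> linarith

theorem exists_mem_vertexSet_dotProduct_le {p : ℕ} {c δ : Fin p → ℝ} {τ : ℝ}
    (hδ : ∀ j, |δ j| ≤ τ / 2) : ∃ e ∈ vertexSet p, c ⬝ᵥ δ ≤ τ * (c ⬝ᵥ e) := by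
  refine ⟨fun j => if 0 ≤ c j then 1 / 2 else -(1 / 2),
    fun j => by dsimp only; split_ifs <;> simp, ?_⟩
  rw [dotProduct, dotProduct, Finset.mul_sum]
  refine Finset.sum_le_sum fun j _ => ?_
  obtain ⟨hlo, hhi⟩ := abs_le.mp (hδ j)
  split_ifs with hc
  · nlinarith
  · nlinarith

def closedLoop {n m p : ℕ} (A0 : Matrix (Fin n) (Fin n) ℝ) (A : Fin p → Matrix (Fin n) (Fin n) ℝ)
    (B0 : Matrix (Fin n) (Fin m) ℝ) (B : Fin p → Matrix (Fin n) (Fin m) ℝ)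
    (K : Matrix (Fin m) (Fin n) ℝ) (θ : Fin p → ℝ) : Matrix (Fin n) (Fin n) ℝ :=
  Amat A0 A θ + Bmat B0 B θ * K

section ClosedLoop

variable {n m p : ℕ} (A0 : Matrix (Fin n) (Fin n) ℝ) (A : Fin p → Matrix (Fin n) (Fin n) ℝ)
  (B0 : Matrix (Fin n) (Fin m) ℝ) (B : Fin p → Matrix (Fin n) (Fin m) ℝ)
  (K : Matrix (Fin m) (Fin n) ℝ)

theorem Dmat_mulVec (x : Fin n → ℝ) (u : Fin m → ℝ) (θ : Fin p → ℝ) :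
    Dmat A B x u *ᵥ θ = ∑ j, θ j • (A j *ᵥ x + B j *ᵥ u) := by
  ext k
  simp [Dmat, mulVec, dotProduct, mul_comm, mul_add]

theorem Dmat_smul (t : ℝ) (x : Fin n → ℝ) (u : Fin m → ℝ) :
    Dmat A B (t • x) (t • u) = t • Dmat A B x u := by
  ext k j
  simp [Dmat, mulVec_smul, mul_add]

theorem closedLoop_mulVec (θ : Fin p → ℝ) (x : Fin n → ℝ) :
    closedLoop A0 A B0 B K θ *ᵥ x = (A0 + B0 * K) *ᵥ x + Dmat A B x (K *ᵥ x) *ᵥ θ := by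
  simp only [closedLoop, Amat, Bmat, Dmat_mulVec, add_mulVec, ← mulVec_mulVec, sum_mulVec,
    smul_mulVec, smul_add, Finset.sum_add_distrib]
  abel

end ClosedLoop

section SupportBounds

variable {n m p r : ℕ} (H : Fin r → (Fin n → ℝ)) {P : Set (Fin n → ℝ)}
  (A : Fin p → Matrix (Fin n) (Fin n) ℝ) (B : Fin p → Matrix (Fin n) (Fin m) ℝ)
  (K : Matrix (Fin m) (Fin n) ℝ)

theorem le_rho (hPc : IsCompact P) (M : Matrix (Fin n) (Fin n) ℝ) {x : Fin n → ℝ} (hx : x ∈ P)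
    (i : Fin r) : H i ⬝ᵥ (M *ᵥ x) ≤ rho H P M := by
  refine le_csSup ?_ ⟨i, x, hx, rfl⟩
  refine (((isCompact_univ (X := Fin r)).prod hPc).image
    (f := fun q : Fin r × (Fin n → ℝ) => H q.1 ⬝ᵥ (M *ᵥ q.2)) (by fun_prop)).bddAbove.mono ?_
  rintro _ ⟨i, x, hx, rfl⟩
  exact ⟨(i, x), ⟨trivial, hx⟩, rfl⟩

theorem rho_le [Nonempty (Fin r)] (hP : P.Nonempty) {M : Matrix (Fin n) (Fin n) ℝ} {C : ℝ}
    (h : ∀ i, ∀ x ∈ P, H i ⬝ᵥ (M *ᵥ x) ≤ C) : rho H P M ≤ C := by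
  obtain ⟨x, hx⟩ := hP
  obtain ⟨i⟩ := ‹Nonempty (Fin r)›
  refine csSup_le ⟨_, i, x, hx, rfl⟩ ?_
  rintro _ ⟨i, x, hx, rfl⟩
  exact h i x hx

theorem isCompact_vertexSet (p : ℕ) : IsCompact (vertexSet p) := by
  have : vertexSet p = Set.univ.pi fun _ => ({1 / 2, -(1 / 2)} : Set ℝ) := by
    ext e
    simp [vertexSet, Set.mem_pi]
  rw [this]
  exact isCompact_univ_pi fun _ => (Set.toFinite _).isCompact

theorem le_LB (hPc : IsCompact P) {e : Fin p → ℝ} (he : e ∈ vertexSet p) {x : Fin n → ℝ}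
    (hx : x ∈ P) (i : Fin r) : H i ⬝ᵥ (Dmat A B x (K *ᵥ x) *ᵥ e) ≤ LB H P A B K := by
  refine le_csSup ?_ ⟨i, e, he, x, hx, rfl⟩
  refine (((isCompact_univ (X := Fin r)).prod ((isCompact_vertexSet p).prod hPc)).image
    (f := fun q : Fin r × (Fin p → ℝ) × (Fin n → ℝ) =>
      H q.1 ⬝ᵥ (Dmat A B q.2.2 (K *ᵥ q.2.2) *ᵥ q.2.1)) ?_).bddAbove.mono ?_
  · simp only [Dmat_mulVec]
    fun_prop
  · rintro _ ⟨i, e, he, x, hx, rfl⟩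
    exact ⟨(i, e, x), ⟨trivial, he, hx⟩, rfl⟩

end SupportBounds

section Invariance

variable {n m p r : ℕ} (A0 : Matrix (Fin n) (Fin n) ℝ) (A : Fin p → Matrix (Fin n) (Fin n) ℝ)
  (B0 : Matrix (Fin n) (Fin m) ℝ) (B : Fin p → Matrix (Fin n) (Fin m) ℝ)
  (K : Matrix (Fin m) (Fin n) ℝ) (H : Fin r → (Fin n → ℝ)) {P : Set (Fin n → ℝ)}

theorem dotProduct_closedLoop_mulVec_le (hPc : IsCompact P) {θ θ0 : Fin p → ℝ} {τ : ℝ}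
    (hτ : 0 ≤ τ) (hθ : ∀ j, |θ j - θ0 j| ≤ τ / 2) {z : Fin n → ℝ} (hz : z ∈ P) (i : Fin r) :
    H i ⬝ᵥ (closedLoop A0 A B0 B K θ *ᵥ z) ≤
      rho H P (closedLoop A0 A B0 B K θ0) + τ * LB H P A B K := by
  set D := Dmat A B z (K *ᵥ z)
  have hsplit : closedLoop A0 A B0 B K θ *ᵥ z =
      closedLoop A0 A B0 B K θ0 *ᵥ z + D *ᵥ (θ - θ0) := by
    rw [closedLoop_mulVec, closedLoop_mulVec, mulVec_sub]
    abel
  obtain ⟨e, he, hδe⟩ := exists_mem_vertexSet_dotProduct_le (c := H i ᵥ* D) (δ := θ - θ0) hθ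
  rw [← dotProduct_mulVec, ← dotProduct_mulVec] at hδe
  calc H i ⬝ᵥ (closedLoop A0 A B0 B K θ *ᵥ z)
      = H i ⬝ᵥ (closedLoop A0 A B0 B K θ0 *ᵥ z) + H i ⬝ᵥ (D *ᵥ (θ - θ0)) := by
        rw [hsplit, dotProduct_add]
    _ ≤ rho H P (closedLoop A0 A B0 B K θ0) + τ * LB H P A B K := by
        gcongr
        · exact le_rho H hPc _ hz i
        · exact hδe.trans (mul_le_mul_of_nonneg_left (le_LB H A B K hPc he hz i) hτ)

theorem wfun_le [Nonempty (Fin r)] (hPc : IsCompact {x | ∀ i, H i ⬝ᵥ x ≤ 1}) {η a : ℝ}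
    (hη : 0 ≤ η) (ha : 0 ≤ a) {x : Fin n → ℝ} (hx : ∀ i, H i ⬝ᵥ x ≤ a) :
    wfun H A B η x (K *ᵥ x) ≤ η * (a * LB H {x | ∀ i, H i ⬝ᵥ x ≤ 1} A B K) := by
  obtain ⟨i⟩ := ‹Nonempty (Fin r)›
  have hvertex : (fun _ => 1 / 2 : Fin p → ℝ) ∈ vertexSet p := fun _ => Or.inl rfl
  refine mul_le_mul_of_nonneg_left (csSup_le ⟨_, i, _, hvertex, rfl⟩ ?_) hη
  rintro _ ⟨i, e, he, rfl⟩
  refine le_mul_of_forall_dotProduct_le H hPc.isBounded (fun t _ z => ?_)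
    (fun z hz => le_LB H A B K hPc he hz i) ha hx
  rw [mulVec_smul, Dmat_smul, smul_mulVec, dotProduct_smul, smul_eq_mul]

end Invariance

theorem terminal_set_invariance_general {n m p r : ℕ}
    (A0 : Matrix (Fin n) (Fin n) ℝ) (A : Fin p → Matrix (Fin n) (Fin n) ℝ)
    (B0 : Matrix (Fin n) (Fin m) ℝ) (B : Fin p → Matrix (Fin n) (Fin m) ℝ)
    (K : Matrix (Fin m) (Fin n) ℝ) (H : Fin r → (Fin n → ℝ))
    (P : Set (Fin n → ℝ)) (hP : P = {x | ∀ i, H i ⬝ᵥ x ≤ 1})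
    (hPc : IsCompact P)
    (Acl : (Fin p → ℝ) → Matrix (Fin n) (Fin n) ℝ)
    (hAcl : ∀ θ, Acl θ = Amat A0 A θ + Bmat B0 B θ * K)
    (Dset : Set (Fin n → ℝ))
    (cmax : ℝ) (hcmax_pos : 0 < cmax)
    (θbar0 θbar : Fin p → ℝ) (η0 η : ℝ) (hη : 0 ≤ η) (hηη0 : η ≤ η0)
    -- `Θ = θ̄ ⊕ ηB_p ⊆ Θ₀ = θ̄₀ ⊕ η₀B_p`
    (hΘsub : {θ : Fin p → ℝ | ∀ i, |θ i - θbar i| ≤ η / 2} ⊆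
      {θ : Fin p → ℝ | ∀ i, |θ i - θbar0 i| ≤ η0 / 2})
    -- terminal condition (eq. 8): `ρ_{θ̄₀} + η₀ L_B + c_max d̄ ≤ 1`
    (hterm : rho H P (Acl θbar0) + η0 * LB H P A B K + cmax * dbarDef H Dset ≤ 1) :
    ∀ (x : Fin n → ℝ) (s : ℝ),
      (∀ i, cmax * (s + H i ⬝ᵥ x) ≤ 1) → 0 ≤ s →
      ∀ stilde : ℝ, 0 ≤ stilde →
      ∀ splus : ℝ, 0 ≤ splus →
        splus ≤ (rho H P (Acl θbar) + η * LB H P A B K) * s +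
          wfun H A B η x (K *ᵥ x) + dbarDef H Dset - stilde →
      ∀ xplus : Fin n → ℝ,
        (∀ i, H i ⬝ᵥ (xplus - Acl θbar *ᵥ x) ≤ stilde) →
        ∀ i, cmax * (splus + H i ⬝ᵥ xplus) ≤ 1 := by
  intro x s hxs hs stilde _ splus _ hsplus xplus hxplus i
  subst hP
  obtain rfl : Acl = closedLoop A0 A B0 B K := funext hAcl
  set ρ0 := rho H {x | ∀ i, H i ⬝ᵥ x ≤ 1} (closedLoop A0 A B0 B K θbar0)
  set L := LB H {x | ∀ i, H i ⬝ᵥ x ≤ 1} A B K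
  have : Nonempty (Fin r) := ⟨i⟩
  have hδ := abs_sub_le_of_box_subset hη hΘsub
  have hxa : ∀ j, H j ⬝ᵥ x ≤ 1 / cmax - s := fun j =>
    le_sub_iff_add_le'.2 ((le_div_iff₀' hcmax_pos).2 (hxs j))
  have ha := nonneg_of_forall_dotProduct_le H hPc.isBounded hxa
  have hbound := fun z (hz : z ∈ {x | ∀ i, H i ⬝ᵥ x ≤ 1}) j =>
    dotProduct_closedLoop_mulVec_le A0 A B0 B K H hPc (sub_nonneg.2 hηη0) hδ hz j
  have hρ := rho_le H ⟨0, fun j => by simp⟩ fun j z hz => hbound z hz j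
  have hAx := le_mul_of_forall_dotProduct_le H hPc.isBounded
    (fun t _ z => by rw [mulVec_smul, dotProduct_smul, smul_eq_mul]) (fun z hz => hbound z hz i)
    ha hxa
  have hw := wfun_le A B K H hPc hη ha hxa
  have hxplus_le : H i ⬝ᵥ xplus ≤ H i ⬝ᵥ (closedLoop A0 A B0 B K θbar *ᵥ x) + stilde := by
    linarith [dotProduct_sub (H i) xplus (closedLoop A0 A B0 B K θbar *ᵥ x), hxplus i]
  have hnext : splus + H i ⬝ᵥ xplus ≤ (ρ0 + η0 * L) * (1 / cmax) + dbarDef H Dset := by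
    linear_combination hsplus + hxplus_le + hw + hAx + mul_le_mul_of_nonneg_right hρ hs
  calc cmax * (splus + H i ⬝ᵥ xplus)
      ≤ cmax * ((ρ0 + η0 * L) * (1 / cmax) + dbarDef H Dset) :=
        mul_le_mul_of_nonneg_left hnext hcmax_pos.le
    _ = ρ0 + η0 * L + cmax * dbarDef H Dset := by field_simp
    _ ≤ 1 := hterm

/-- Proposition 3, invariance part: if
`ρ_{θ̄₀} + η₀L_B + c_max d̄ ≤ 1` and `Θ = θ̄ ⊕ ηB_p ⊆ θ̄₀ ⊕ η₀B_p`, then the terminal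
set `X_f = {(x,s) | c_max(s + H_i x) ≤ 1 ∀i}` is robustly positively invariant for the
tube dynamics. -/
theorem terminal_set_invariance {n m p r q : ℕ}
    (A0 : Matrix (Fin n) (Fin n) ℝ) (A : Fin p → Matrix (Fin n) (Fin n) ℝ)
    (B0 : Matrix (Fin n) (Fin m) ℝ) (B : Fin p → Matrix (Fin n) (Fin m) ℝ)
    (K : Matrix (Fin m) (Fin n) ℝ) (H : Fin r → (Fin n → ℝ))
    (P : Set (Fin n → ℝ)) (hP : P = {x | ∀ i, H i ⬝ᵥ x ≤ 1})
    (hPc : IsCompact P) (h0 : (0 : Fin n → ℝ) ∈ interior P)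
    (Acl : (Fin p → ℝ) → Matrix (Fin n) (Fin n) ℝ)
    (hAcl : ∀ θ, Acl θ = Amat A0 A θ + Bmat B0 B θ * K)
    (Dset : Set (Fin n → ℝ)) (hDc : IsCompact Dset) (hDne : Dset.Nonempty)
    (F : Fin q → (Fin n → ℝ)) (G : Fin q → (Fin m → ℝ))
    (c : Fin q → ℝ)
    (hc : ∀ j, IsGreatest ((fun x => F j ⬝ᵥ x + G j ⬝ᵥ (K *ᵥ x)) '' P) (c j))
    (cmax : ℝ) (hcmax : IsGreatest (Set.range c) cmax) (hcmax_pos : 0 < cmax)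
    (θbar0 θbar : Fin p → ℝ) (η0 η : ℝ) (hη : 0 ≤ η) (hηη0 : η ≤ η0)
    -- `Θ = θ̄ ⊕ ηB_p ⊆ Θ₀ = θ̄₀ ⊕ η₀B_p`
    (hΘsub : {θ : Fin p → ℝ | ∀ i, |θ i - θbar i| ≤ η / 2} ⊆
      {θ : Fin p → ℝ | ∀ i, |θ i - θbar0 i| ≤ η0 / 2})
    -- terminal condition (eq. 8): `ρ_{θ̄₀} + η₀ L_B + c_max d̄ ≤ 1`
    (hterm : rho H P (Acl θbar0) + η0 * LB H P A B K + cmax * dbarDef H Dset ≤ 1) :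
    ∀ (x : Fin n → ℝ) (s : ℝ),
      (∀ i, cmax * (s + H i ⬝ᵥ x) ≤ 1) → 0 ≤ s →
      ∀ stilde : ℝ, 0 ≤ stilde →
      ∀ splus : ℝ, 0 ≤ splus →
        splus ≤ (rho H P (Acl θbar) + η * LB H P A B K) * s +
          wfun H A B η x (K *ᵥ x) + dbarDef H Dset - stilde →
      ∀ xplus : Fin n → ℝ,
        (∀ i, H i ⬝ᵥ (xplus - Acl θbar *ᵥ x) ≤ stilde) →
        ∀ i, cmax * (splus + H i ⬝ᵥ xplus) ≤ 1 :=
  terminal_set_invariance_general A0 A B0 B K H P hP hPc Acl hAcl Dset cmax hcmax_pos θbar0 θbar η0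
    η hη hηη0 hΘsub hterm
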